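/- arXiv:2012.13707 — 2 statements merged into one kernel-verified Lean document; each statement's English description precedes it below -/
import Mathlib

section
/- Let X be a finite set, P and Q probability distributions on X with full support, ρ > 0, α = 1/(1+ρ), and Z_Q = ∑_{x} Q(x)^α. Suppose ψ : X → (0,∞) satisfies ψ(x) ≥ a · Z_Q / Q(x)^α for all x, for some a > 0. Then ∑_x P(x) ψ(x)^ρ ≥ 2^{ρ·(H_α(P) + I_α(P,Q) + log a)}. -/
/-!
Since `(1 - α) / α = ρ`, the inner sum in `I_α` is `Z_Q / Q(x)^α` and `H_α(P)` cancels: the exponent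
is `log S + ρ log a` with `S = ∑ P(x) (Z_Q / Q(x)^α)^ρ`. Hence the bound reads
`∑ P(x) ψ(x)^ρ ≥ ∑ P(x) (a Z_Q / Q(x)^α)^ρ`, which is termwise monotonicity of `t ↦ t^ρ`.
-/

open Real Finset

section

variable {X : Type*} [Fintype X]

noncomputable def renyiEntropy (α : ℝ) (P : X → ℝ) : ℝ :=
  (1 / (1 - α)) * logb 2 (∑ x, P x ^ α)

noncomputable def sundaresanDivergence (α : ℝ) (P Q : X → ℝ) : ℝ :=
  (α / (1 - α)) * logb 2 (∑ x, P x * (∑ x', (Q x' / Q x) ^ α) ^ ((1 - α) / α))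
    - renyiEntropy α P

theorem renyiEntropy_add_sundaresanDivergence (α : ℝ) (P Q : X → ℝ) :
    renyiEntropy α P + sundaresanDivergence α P Q
      = (α / (1 - α)) * logb 2 (∑ x, P x * (∑ x', (Q x' / Q x) ^ α) ^ ((1 - α) / α)) := by
  unfold sundaresanDivergence
  ring

theorem sum_div_rpow_eq_sum_rpow_div {Q : X → ℝ} (hQ : ∀ x, 0 ≤ Q x) (α : ℝ) (y : X) :
    ∑ x, (Q x / Q y) ^ α = (∑ x, Q x ^ α) / Q y ^ α := by
  rw [sum_div]
  exact sum_congr rfl fun x _ => div_rpow (hQ x) (hQ y) α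

end

theorem one_sub_div_eq_of_eq_one_div_one_add {α ρ : ℝ} (hρ : 0 < ρ) (hα : α = 1 / (1 + ρ)) :
    (1 - α) / α = ρ := by
  subst hα
  field_simp
  ring

theorem rpow_mul_inv_mul_logb_add_logb {b S a ρ : ℝ} (hb : 1 < b) (hS : 0 < S) (ha : 0 < a)
    (hρ : ρ ≠ 0) : b ^ (ρ * (ρ⁻¹ * logb b S + logb b a)) = S * a ^ ρ := by
  have hb₀ : 0 < b := by linarith
  rw [mul_add, ← mul_assoc, mul_inv_cancel₀ hρ, one_mul, rpow_add hb₀, rpow_logb hb₀ hb.ne' hS,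
    mul_comm ρ, rpow_mul hb₀.le, rpow_logb hb₀ hb.ne' ha]

theorem stmt4_general {X : Type*} [Fintype X]
    (P Q : X → ℝ) (hP : ∀ x, 0 < P x) (hPsum : ∑ x, P x = 1)
    (hQ : ∀ x, 0 < Q x)
    (ρ : ℝ) (hρ : 0 < ρ) (α : ℝ) (hα : α = 1 / (1 + ρ))
    (ZQ : ℝ) (hZQ : ZQ = ∑ x, Q x ^ α)
    (ψ : X → ℝ)
    (a : ℝ) (ha : 0 < a) (hψ : ∀ x, ψ x ≥ a * ZQ / Q x ^ α) :
    ∑ x, P x * ψ x ^ ρ ≥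
      (2 : ℝ) ^ (ρ * ((1 / (1 - α)) * Real.logb 2 (∑ x, P x ^ α)
        + ((α / (1 - α)) * Real.logb 2
            (∑ x, P x * (∑ x', (Q x' / Q x) ^ α) ^ ((1 - α) / α))
          - (1 / (1 - α)) * Real.logb 2 (∑ x, P x ^ α))
        + Real.logb 2 a)) := by
  change _ ≥ 2 ^ (ρ * (renyiEntropy α P + sundaresanDivergence α P Q + logb 2 a))
  have hρα : (1 - α) / α = ρ := one_sub_div_eq_of_eq_one_div_one_add hρ hα
  have hX : (univ : Finset X).Nonempty := nonempty_of_sum_ne_zero (hPsum ▸ one_ne_zero)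
  have hZQ_pos : 0 < ZQ := hZQ ▸ sum_pos (fun x _ => rpow_pos_of_pos (hQ x) α) hX
  have hS_pos : 0 < ∑ x, P x * (ZQ / Q x ^ α) ^ ρ := sum_pos (fun x _ =>
    mul_pos (hP x) (rpow_pos_of_pos (div_pos hZQ_pos (rpow_pos_of_pos (hQ x) α)) ρ)) hX
  rw [renyiEntropy_add_sundaresanDivergence, ← inv_div, hρα]
  simp_rw [sum_div_rpow_eq_sum_rpow_div (fun x => (hQ x).le), ← hZQ]
  rw [rpow_mul_inv_mul_logb_add_logb one_lt_two hS_pos ha hρ.ne', sum_mul]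
  refine sum_le_sum fun x _ => ?_
  have hZQ_Q : 0 ≤ ZQ / Q x ^ α := (div_pos hZQ_pos (rpow_pos_of_pos (hQ x) α)).le
  calc P x * (ZQ / Q x ^ α) ^ ρ * a ^ ρ
      = P x * (a * ZQ / Q x ^ α) ^ ρ := by
        rw [mul_assoc, ← mul_rpow hZQ_Q ha.le, mul_div_assoc, mul_comm a]
    _ ≤ P x * ψ x ^ ρ := by
      gcongr
      exacts [(hP x).le, mul_div_assoc a ZQ _ ▸ mul_nonneg ha.le hZQ_Q, hψ x]

theorem stmt4 {X : Type*} [Fintype X]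
    (P Q : X → ℝ) (hP : ∀ x, 0 < P x) (hPsum : ∑ x, P x = 1)
    (hQ : ∀ x, 0 < Q x) (hQsum : ∑ x, Q x = 1)
    (ρ : ℝ) (hρ : 0 < ρ) (α : ℝ) (hα : α = 1 / (1 + ρ))
    (ZQ : ℝ) (hZQ : ZQ = ∑ x, Q x ^ α)
    (ψ : X → ℝ) (hψpos : ∀ x, 0 < ψ x)
    (a : ℝ) (ha : 0 < a) (hψ : ∀ x, ψ x ≥ a * ZQ / Q x ^ α) :
    ∑ x, P x * ψ x ^ ρ ≥
      (2 : ℝ) ^ (ρ * ((1 / (1 - α)) * Real.logb 2 (∑ x, P x ^ α)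
        + ((α / (1 - α)) * Real.logb 2
            (∑ x, P x * (∑ x', (Q x' / Q x) ^ α) ^ ((1 - α) / α))
          - (1 / (1 - α)) * Real.logb 2 (∑ x, P x ^ α))
        + Real.logb 2 a)) :=
  stmt4_general P Q hP hPsum hQ ρ hρ α hα ZQ hZQ ψ a ha hψ
end

section
/- Let X be a finite set, P a probability distribution on X with full support, ρ ∈ (-1,0) ∪ (0,∞), α = 1/(1+ρ), and 𝒜 a partition of X into M nonempty blocks with partition function A. Define Q_A(x) = A(x)^{-1/α} / ∑_{x'} A(x')^{-1/α}. Then (1/ρ)·log(∑_x P(x)·A(x)^ρ) = H_α(P) + I_α(P, Q_A) − log M. -/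
/-!
With `A(x) = |B x|` the block sizes, the escort ratios of `Q_A` are `(Q_A(x')/Q_A(x))^α = A(x)/A(x')`,
so the inner sum of Sundaresan's divergence is `A(x) · ∑_{x'} 1/A(x') = A(x) · M`, since each block
contributes `1` to `∑ 1/A`. Raising to the power `(1-α)/α = ρ` turns the divergence term into
`(1/ρ) log (M^ρ ∑ P(x) A(x)^ρ)`, and the Rényi entropies cancel.
-/

open Real Finset

section Partition

variable {X : Type*} [Fintype X] [DecidableEq X] {B : X → Finset X}

theorem filter_eq_block_eq (hmem : ∀ x, x ∈ B x) (hblock : ∀ x y, y ∈ B x → B y = B x) (x : X) :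
    univ.filter (fun y => B y = B x) = B x := by
  ext y
  simp only [mem_filter, mem_univ, true_and]
  exact ⟨fun h => h ▸ hmem y, hblock x y⟩

theorem sum_inv_card_block_eq_card_image (hmem : ∀ x, x ∈ B x)
    (hblock : ∀ x y, y ∈ B x → B y = B x) :
    ∑ x, ((B x).card : ℝ)⁻¹ = (univ.image B).card := by
  rw [← sum_fiberwise_of_maps_to (fun x _ => mem_image_of_mem B (mem_univ x)),
    card_eq_sum_ones, Nat.cast_sum]
  refine sum_congr rfl fun b hb => ?_
  obtain ⟨x, -, rfl⟩ := mem_image.1 hb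
  have hpos : ((B x).card : ℝ) ≠ 0 := by exact_mod_cast (card_pos.2 ⟨x, hmem x⟩).ne'
  rw [sum_congr rfl fun y hy => by rw [(mem_filter.1 hy).2], sum_const,
    filter_eq_block_eq hmem hblock, nsmul_eq_mul, mul_inv_cancel₀ hpos, Nat.cast_one]

end Partition

theorem rpow_neg_inv_div_rpow_neg_inv_rpow {a b α : ℝ} (ha : 0 ≤ a) (hb : 0 ≤ b) (hα : α ≠ 0) :
    (a ^ (-(1 / α)) / b ^ (-(1 / α))) ^ α = b / a := by
  rw [div_rpow (rpow_nonneg ha _) (rpow_nonneg hb _), ← rpow_mul ha, ← rpow_mul hb,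
    show -(1 / α) * α = -1 by field_simp, rpow_neg_one, rpow_neg_one, inv_div_inv]

theorem stmt18_general {X : Type*} [Fintype X] [DecidableEq X]
    (P : X → ℝ) (hP : ∀ x, 0 < P x)
    (ρ : ℝ) (hρ : ρ ∈ Set.Ioo (-1 : ℝ) 0 ∪ Set.Ioi (0 : ℝ))
    (α : ℝ) (hα : α = 1 / (1 + ρ))
    (B : X → Finset X) (hmem : ∀ x, x ∈ B x)
    (hblock : ∀ x y, y ∈ B x → B y = B x)
    (M : ℕ) (hM : (Finset.univ.image B).card = M)
    (QA : X → ℝ)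
    (hQA : ∀ x, QA x = ((B x).card : ℝ) ^ (-(1 / α)) /
        ∑ x', ((B x').card : ℝ) ^ (-(1 / α))) :
    (1 / ρ) * Real.logb 2 (∑ x, P x * ((B x).card : ℝ) ^ ρ) =
      (1 / (1 - α)) * Real.logb 2 (∑ x, P x ^ α)
      + ((α / (1 - α)) * Real.logb 2
          (∑ x, P x * (∑ x', (QA x' / QA x) ^ α) ^ ((1 - α) / α))
        - (1 / (1 - α)) * Real.logb 2 (∑ x, P x ^ α))
      - Real.logb 2 M := by
  rcases isEmpty_or_nonempty X with hX | hX
  · simp [← hM]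
  have hcard (x : X) : (0 : ℝ) < (B x).card := by exact_mod_cast card_pos.2 ⟨x, hmem x⟩
  have hρ0 : ρ ≠ 0 := by rcases hρ with h | h <;> [exact h.2.ne; exact (Set.mem_Ioi.1 h).ne']
  have hρ1 : 1 + ρ ≠ 0 := by rcases hρ with h | h <;> [linarith [h.1]; linarith [Set.mem_Ioi.1 h]]
  have hα0 : α ≠ 0 := by rw [hα]; exact one_div_ne_zero hρ1
  have hexp : (1 - α) / α = ρ := by rw [hα]; field_simp; ring
  have hM0 : (0 : ℝ) < M := by rw [← hM]; exact_mod_cast card_pos.2 (univ_nonempty.image B)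
  have hinner (x : X) : ∑ x', (QA x' / QA x) ^ α = (B x).card * M := by
    have hS : ∑ x', ((B x').card : ℝ) ^ (-(1 / α)) ≠ 0 :=
      (sum_pos (fun x' _ => rpow_pos_of_pos (hcard x') _) univ_nonempty).ne'
    simp_rw [hQA, div_div_div_cancel_right₀ hS,
      rpow_neg_inv_div_rpow_neg_inv_rpow (hcard _).le (hcard x).le hα0, div_eq_mul_inv,
      ← mul_sum, sum_inv_card_block_eq_card_image hmem hblock, hM]
  have hdiv : ∑ x, P x * (∑ x', (QA x' / QA x) ^ α) ^ ((1 - α) / α)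
      = (∑ x, P x * ((B x).card : ℝ) ^ ρ) * (M : ℝ) ^ ρ := by
    simp_rw [hinner, hexp, mul_rpow (hcard _).le hM0.le, sum_mul, mul_assoc]
  have hT : 0 < ∑ x, P x * ((B x).card : ℝ) ^ ρ :=
    sum_pos (fun x _ => mul_pos (hP x) (rpow_pos_of_pos (hcard x) _)) univ_nonempty
  have hcoef : α / (1 - α) = 1 / ρ := by rw [← hexp, one_div_div]
  rw [hdiv, hcoef, logb_mul hT.ne' (rpow_pos_of_pos hM0 ρ).ne', logb_rpow_eq_mul_logb_of_pos hM0]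
  field_simp
  ring

theorem stmt18 {X : Type*} [Fintype X] [DecidableEq X]
    (P : X → ℝ) (hP : ∀ x, 0 < P x) (hPsum : ∑ x, P x = 1)
    (ρ : ℝ) (hρ : ρ ∈ Set.Ioo (-1 : ℝ) 0 ∪ Set.Ioi (0 : ℝ))
    (α : ℝ) (hα : α = 1 / (1 + ρ))
    (B : X → Finset X) (hmem : ∀ x, x ∈ B x)
    (hblock : ∀ x y, y ∈ B x → B y = B x)
    (M : ℕ) (hM : (Finset.univ.image B).card = M)
    (QA : X → ℝ)
    (hQA : ∀ x, QA x = ((B x).card : ℝ) ^ (-(1 / α)) /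
        ∑ x', ((B x').card : ℝ) ^ (-(1 / α))) :
    (1 / ρ) * Real.logb 2 (∑ x, P x * ((B x).card : ℝ) ^ ρ) =
      (1 / (1 - α)) * Real.logb 2 (∑ x, P x ^ α)
      + ((α / (1 - α)) * Real.logb 2
          (∑ x, P x * (∑ x', (QA x' / QA x) ^ α) ^ ((1 - α) / α))
        - (1 / (1 - α)) * Real.logb 2 (∑ x, P x ^ α))
      - Real.logb 2 M :=
  stmt18_general P hP ρ hρ α hα B hmem hblock M hM QA hQA
end
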